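/- arXiv:2509.23319 — 9 statements merged into one kernel-verified Lean document; each statement's English description precedes it below -/
import Mathlib

section
/- Let X be a nontrivial real Banach space. For every t ∈ [0, 1/2], C_Z^I(t) = (1/2) · Z_X(1 − 2t). -/
open Set Pointwise

/-- `C_Z^I(t)`: the sup of `‖t•x + (1-t)•y‖ * ‖(1-t)•x + t•y‖ / ‖x+y‖²` over
pairs `(x, y) ≠ (0, 0)` that are isosceles orthogonal (`‖x+y‖ = ‖x-y‖`). -/
noncomputable def CZI (X : Type*) [NormedAddCommGroup X] [NormedSpace ℝ X] (t : ℝ) : ℝ :=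
  sSup { r : ℝ | ∃ x y : X, (x, y) ≠ (0, 0) ∧ ‖x + y‖ = ‖x - y‖ ∧
    r = ‖t • x + (1 - t) • y‖ * ‖(1 - t) • x + t • y‖ / ‖x + y‖ ^ 2 }

/-- `Z_X(t)`: the sup of `‖x + t•y‖ * ‖x - t•y‖ / 2` over unit vectors `x, y`. -/
noncomputable def ZX (X : Type*) [NormedAddCommGroup X] [NormedSpace ℝ X] (t : ℝ) : ℝ :=
  sSup { r : ℝ | ∃ x y : X, ‖x‖ = 1 ∧ ‖y‖ = 1 ∧ r = ‖x + t • y‖ * ‖x - t • y‖ / 2 }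

/-!
With `c = ‖x + y‖`, `u = c⁻¹ • (x + y)` and `v = c⁻¹ • (x - y)` one has
`(1 - t) • x + t • y = (c / 2) • (u + (1 - 2t) • v)` and `t • x + (1 - t) • y = (c / 2) • (u - (1 - 2t) • v)`,
so the quotient defining `C_Z^I(t)` equals `‖u + (1 - 2t) • v‖ * ‖u - (1 - 2t) • v‖ / 4`.
Isosceles orthogonality of `x, y` says exactly that `u` and `v` are unit vectors, and conversely
every pair of unit vectors arises this way from `x = (u + v) / 2`, `y = (u - v) / 2`.
So the two suprema are taken over the same set of reals up to the factor `1 / 2`.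
-/

section

variable {X : Type*} [NormedAddCommGroup X] [NormedSpace ℝ X]

lemma add_ne_zero_of_norm_add_eq_norm_sub {x y : X} (hxy : (x, y) ≠ (0, 0))
    (h : ‖x + y‖ = ‖x - y‖) : x + y ≠ 0 := by
  intro hsum
  have hdiff : x - y = 0 := norm_eq_zero.mp (h ▸ hsum ▸ norm_zero)
  have hx : x = 0 := by
    have : (2 : ℝ) • x = (x + y) + (x - y) := by module
    simpa [hsum, hdiff] using this
  exact hxy (by simp_all)

lemma isoscelesQuotient_eq_normalized (t : ℝ) (x y : X) :
    ‖t • x + (1 - t) • y‖ * ‖(1 - t) • x + t • y‖ / ‖x + y‖ ^ 2 =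
      ‖‖x + y‖⁻¹ • (x + y) + (1 - 2 * t) • ‖x + y‖⁻¹ • (x - y)‖ *
        ‖‖x + y‖⁻¹ • (x + y) - (1 - 2 * t) • ‖x + y‖⁻¹ • (x - y)‖ / 4 := by
  set c := ‖x + y‖
  have hplus : c⁻¹ • (x + y) + (1 - 2 * t) • c⁻¹ • (x - y) =
      (2 * c⁻¹) • ((1 - t) • x + t • y) := by module
  have hminus : c⁻¹ • (x + y) - (1 - 2 * t) • c⁻¹ • (x - y) =
      (2 * c⁻¹) • (t • x + (1 - t) • y) := by module
  rw [hplus, hminus, norm_smul, norm_smul, Real.norm_of_nonneg (by positivity)]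
  ring

lemma CZI_set_eq_half_smul_ZX_set (t : ℝ) :
    { r : ℝ | ∃ x y : X, (x, y) ≠ (0, 0) ∧ ‖x + y‖ = ‖x - y‖ ∧
        r = ‖t • x + (1 - t) • y‖ * ‖(1 - t) • x + t • y‖ / ‖x + y‖ ^ 2 } =
      (1 / 2 : ℝ) • { r : ℝ | ∃ u v : X, ‖u‖ = 1 ∧ ‖v‖ = 1 ∧
        r = ‖u + (1 - 2 * t) • v‖ * ‖u - (1 - 2 * t) • v‖ / 2 } := by
  ext r
  constructor
  · rintro ⟨x, y, hxy, hiso, rfl⟩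
    have hsum := add_ne_zero_of_norm_add_eq_norm_sub hxy hiso
    refine ⟨_, ⟨‖x + y‖⁻¹ • (x + y), ‖x + y‖⁻¹ • (x - y), norm_smul_inv_norm hsum, ?_, rfl⟩, ?_⟩
    · rw [norm_smul, norm_inv, norm_norm, ← hiso, inv_mul_cancel₀ (norm_ne_zero_iff.mpr hsum)]
    · rw [isoscelesQuotient_eq_normalized]
      simp only [smul_eq_mul]
      ring
  · rintro ⟨_, ⟨u, v, hu, hv, rfl⟩, rfl⟩
    have hsum : (1 / 2 : ℝ) • (u + v) + (1 / 2 : ℝ) • (u - v) = u := by module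
    have hdiff : (1 / 2 : ℝ) • (u + v) - (1 / 2 : ℝ) • (u - v) = v := by module
    refine ⟨(1 / 2 : ℝ) • (u + v), (1 / 2 : ℝ) • (u - v), ?_, by rw [hsum, hdiff, hu, hv], ?_⟩
    · intro h
      simp only [Prod.mk.injEq] at h
      rw [h.1, h.2, add_zero] at hsum
      simp [← hsum] at hu
    · rw [isoscelesQuotient_eq_normalized, hsum, hdiff, hu, inv_one, one_smul, one_smul]
      simp only [smul_eq_mul]
      ring

end

-- `Real.sSup_smul_of_nonneg` also covers the junk value `sSup = 0` of unbounded or empty sets.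
theorem CZI_eq_half_mul_ZX (X : Type*) [NormedAddCommGroup X] [NormedSpace ℝ X] (t : ℝ) :
    CZI X t = (1 / 2) * ZX X (1 - 2 * t) := by
  rw [CZI, ZX, CZI_set_eq_half_smul_ZX_set, Real.sSup_smul_of_nonneg (by norm_num), smul_eq_mul]

theorem stmt_0_general (X : Type*) [NormedAddCommGroup X] [NormedSpace ℝ X] :
    ∀ t ∈ Icc (0 : ℝ) (1 / 2), CZI X t = (1 / 2) * ZX X (1 - 2 * t) :=
  fun t _ => CZI_eq_half_mul_ZX X t

theorem stmt_0 (X : Type*) [NormedAddCommGroup X] [NormedSpace ℝ X]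
    [CompleteSpace X] [Nontrivial X] :
    ∀ t ∈ Icc (0 : ℝ) (1 / 2), CZI X t = (1 / 2) * ZX X (1 - 2 * t) :=
  stmt_0_general X
end

section
/- Let H be a real Hilbert space with dim H ≥ 2. Then for every t ∈ [0, 1/2], C_Z^I(t) = (t² + (1 − t)²)/2. -/
open Set

open RealInnerProductSpace InnerProductGeometry

section

variable {F : Type*} [NormedAddCommGroup F] [InnerProductSpace ℝ F] {x y : F}

theorem norm_add_eq_norm_sub_iff_real_inner_eq_zero : ‖x + y‖ = ‖x - y‖ ↔ ⟪x, y⟫ = 0 :=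
  (norm_add_eq_norm_sub_iff_angle_eq_pi_div_two x y).trans
    (inner_eq_zero_iff_angle_eq_pi_div_two x y).symm

theorem norm_smul_add_smul_sq_of_real_inner_eq_zero (h : ⟪x, y⟫ = 0) (a b : ℝ) :
    ‖a • x + b • y‖ ^ 2 = a ^ 2 * ‖x‖ ^ 2 + b ^ 2 * ‖y‖ ^ 2 := by
  rw [norm_add_sq_real, real_inner_smul_left, real_inner_smul_right, h, norm_smul, norm_smul,
    Real.norm_eq_abs, Real.norm_eq_abs, mul_pow, mul_pow, sq_abs, sq_abs]
  ring

theorem norm_add_sq_of_real_inner_eq_zero (h : ⟪x, y⟫ = 0) :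
    ‖x + y‖ ^ 2 = ‖x‖ ^ 2 + ‖y‖ ^ 2 := by
  simpa using norm_smul_add_smul_sq_of_real_inner_eq_zero h 1 1

theorem norm_smul_add_smul_mul_norm_swap_le (h : ⟪x, y⟫ = 0) (t : ℝ) :
    ‖t • x + (1 - t) • y‖ * ‖(1 - t) • x + t • y‖ ≤ (t ^ 2 + (1 - t) ^ 2) / 2 * ‖x + y‖ ^ 2 := by
  have hA := norm_smul_add_smul_sq_of_real_inner_eq_zero h t (1 - t)
  have hB := norm_smul_add_smul_sq_of_real_inner_eq_zero h (1 - t) t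
  rw [norm_add_sq_of_real_inner_eq_zero h]
  nlinarith [sq_nonneg (‖t • x + (1 - t) • y‖ - ‖(1 - t) • x + t • y‖)]

theorem norm_smul_add_smul_mul_norm_swap_eq (h : ⟪x, y⟫ = 0) (hxy : ‖x‖ = ‖y‖) (t : ℝ) :
    ‖t • x + (1 - t) • y‖ * ‖(1 - t) • x + t • y‖ = (t ^ 2 + (1 - t) ^ 2) / 2 * ‖x + y‖ ^ 2 := by
  have hA := norm_smul_add_smul_sq_of_real_inner_eq_zero h t (1 - t)
  have hB := norm_smul_add_smul_sq_of_real_inner_eq_zero h (1 - t) t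
  have hAB : ‖t • x + (1 - t) • y‖ = ‖(1 - t) • x + t • y‖ :=
    (sq_eq_sq₀ (norm_nonneg _) (norm_nonneg _)).1 (by rw [hA, hB, hxy]; ring)
  rw [← hAB, ← sq, hA, norm_add_sq_of_real_inner_eq_zero h, hxy]
  ring

end

theorem exists_orthonormal_fin_two {𝕜 E : Type*} [RCLike 𝕜] [NormedAddCommGroup E]
    [InnerProductSpace 𝕜 E] (h : 1 < Module.rank 𝕜 E) : ∃ v : Fin 2 → E, Orthonormal 𝕜 v := by
  have : Nontrivial E := rank_pos_iff_nontrivial.1 (zero_lt_one.trans h)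
  obtain ⟨x, hx⟩ := exists_ne (0 : E)
  obtain ⟨y, hxy⟩ := exists_linearIndependent_pair_of_one_lt_rank h hx
  exact ⟨_, InnerProductSpace.gramSchmidtNormed_orthonormal hxy⟩

theorem stmt_1_general (H : Type*) [NormedAddCommGroup H] [InnerProductSpace ℝ H]
    (hdim : 2 ≤ Module.rank ℝ H) :
    ∀ t ∈ Icc (0 : ℝ) (1 / 2), CZI H t = (t ^ 2 + (1 - t) ^ 2) / 2 := by
  intro t _
  obtain ⟨v, hv⟩ := exists_orthonormal_fin_two (𝕜 := ℝ) (lt_of_lt_of_le (by norm_num) hdim)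
  have hv01 : ⟪v 0, v 1⟫ = 0 := hv.2 (by decide)
  have hsum : ‖v 0 + v 1‖ ^ 2 = 2 := by
    rw [norm_add_sq_of_real_inner_eq_zero hv01, hv.1 0, hv.1 1]; norm_num
  refine IsGreatest.csSup_eq ⟨⟨v 0, v 1, ?_, ?_, ?_⟩, ?_⟩
  · exact fun h ↦ hv.ne_zero 0 (congrArg Prod.fst h)
  · exact norm_add_eq_norm_sub_iff_real_inner_eq_zero.2 hv01
  · rw [norm_smul_add_smul_mul_norm_swap_eq hv01 ((hv.1 0).trans (hv.1 1).symm), hsum]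
    field_simp
  · rintro r ⟨x, y, -, hxy, rfl⟩
    exact div_le_of_le_mul₀ (by positivity) (by positivity)
      (norm_smul_add_smul_mul_norm_swap_le (norm_add_eq_norm_sub_iff_real_inner_eq_zero.1 hxy) t)

theorem stmt_1 (H : Type*) [NormedAddCommGroup H] [InnerProductSpace ℝ H]
    [CompleteSpace H] (hdim : 2 ≤ Module.rank ℝ H) :
    ∀ t ∈ Icc (0 : ℝ) (1 / 2), CZI H t = (t ^ 2 + (1 - t) ^ 2) / 2 :=
  stmt_1_general H hdim
end

section
/- Let X be a nontrivial real Banach space. For every t ∈ [0, 1/2], t − t² ≤ C_Z^I(t) ≤ t² − 2t + 1. -/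
open Set

section IsoscelesOrthogonal

variable {E : Type*} [NormedAddCommGroup E] [NormedSpace ℝ E]

lemma norm_add_pos_of_norm_add_eq_norm_sub {x y : E} (hxy : ‖x + y‖ = ‖x - y‖)
    (hne : (x, y) ≠ (0, 0)) : 0 < ‖x + y‖ := by
  refine norm_pos_iff.2 fun hsum => hne ?_
  have hdiff : x - y = 0 := norm_eq_zero.1 (hxy ▸ norm_eq_zero.2 hsum)
  have hx : x = (1 / 2 : ℝ) • ((x + y) + (x - y)) := by module
  have hy : y = (1 / 2 : ℝ) • ((x + y) - (x - y)) := by module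
  rw [hsum, hdiff] at hx hy
  exact Prod.ext (by simpa using hx) (by simpa using hy)

lemma norm_smul_add_one_sub_smul_le {x y : E} (hxy : ‖x + y‖ = ‖x - y‖) {t : ℝ}
    (ht : t ≤ 1 / 2) : ‖t • x + (1 - t) • y‖ ≤ (1 - t) * ‖x + y‖ :=
  calc ‖t • x + (1 - t) • y‖ = ‖(1 / 2 : ℝ) • (x + y) - (1 / 2 - t) • (x - y)‖ := by
        congr 1; module
    _ ≤ ‖(1 / 2 : ℝ) • (x + y)‖ + ‖(1 / 2 - t) • (x - y)‖ := norm_sub_le _ _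
    _ = (1 - t) * ‖x + y‖ := by
        rw [norm_smul, norm_smul, ← hxy, Real.norm_of_nonneg (by norm_num),
          Real.norm_of_nonneg (by linarith)]
        ring

lemma norm_mul_norm_div_sq_le_of_norm_add_eq_norm_sub {x y : E} (hxy : ‖x + y‖ = ‖x - y‖)
    (hne : (x, y) ≠ (0, 0)) {t : ℝ} (ht : t ≤ 1 / 2) :
    ‖t • x + (1 - t) • y‖ * ‖(1 - t) • x + t • y‖ / ‖x + y‖ ^ 2 ≤ (1 - t) ^ 2 := by
  have hyx : ‖y + x‖ = ‖y - x‖ := by rw [add_comm, norm_sub_rev, hxy]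
  have h₁ := norm_smul_add_one_sub_smul_le hxy ht
  have h₂ : ‖(1 - t) • x + t • y‖ ≤ (1 - t) * ‖x + y‖ := by
    simpa only [add_comm] using norm_smul_add_one_sub_smul_le hyx ht
  rw [div_le_iff₀ (pow_pos (norm_add_pos_of_norm_add_eq_norm_sub hxy hne) 2)]
  calc ‖t • x + (1 - t) • y‖ * ‖(1 - t) • x + t • y‖
      ≤ ((1 - t) * ‖x + y‖) * ((1 - t) * ‖x + y‖) :=
        mul_le_mul h₁ h₂ (norm_nonneg _) (mul_nonneg (by linarith) (norm_nonneg _))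
    _ = (1 - t) ^ 2 * ‖x + y‖ ^ 2 := by ring

lemma norm_mul_norm_div_sq_of_right_eq_zero {x : E} (hx : x ≠ 0) (t : ℝ) :
    ‖t • x + (1 - t) • (0 : E)‖ * ‖(1 - t) • x + t • (0 : E)‖ / ‖x + 0‖ ^ 2 = |t| * |1 - t| := by
  have hx' : ‖x‖ ≠ 0 := norm_ne_zero_iff.2 hx
  simp only [smul_zero, add_zero, norm_smul, Real.norm_eq_abs]
  field_simp

end IsoscelesOrthogonal

section CZI

variable {X : Type*} [NormedAddCommGroup X] [NormedSpace ℝ X] {t : ℝ}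

lemma CZI_le_one_sub_sq (ht : t ≤ 1 / 2) : CZI X t ≤ (1 - t) ^ 2 := by
  refine Real.sSup_le ?_ (sq_nonneg _)
  rintro r ⟨x, y, hne, hxy, rfl⟩
  exact norm_mul_norm_div_sq_le_of_norm_add_eq_norm_sub hxy hne ht

lemma abs_mul_abs_one_sub_le_CZI [Nontrivial X] (ht : t ≤ 1 / 2) : |t| * |1 - t| ≤ CZI X t := by
  obtain ⟨x, hx⟩ := exists_ne (0 : X)
  refine le_csSup ⟨(1 - t) ^ 2, ?_⟩ ⟨x, 0, by simp [hx], by simp, ?_⟩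
  · rintro r ⟨x, y, hne, hxy, rfl⟩
    exact norm_mul_norm_div_sq_le_of_norm_add_eq_norm_sub hxy hne ht
  · exact (norm_mul_norm_div_sq_of_right_eq_zero hx t).symm

end CZI

theorem stmt_2_general (X : Type*) [NormedAddCommGroup X] [NormedSpace ℝ X]
    [Nontrivial X] :
    ∀ t ∈ Icc (0 : ℝ) (1 / 2), t - t ^ 2 ≤ CZI X t ∧ CZI X t ≤ t ^ 2 - 2 * t + 1 := by
  rintro t ⟨ht₀, ht₂⟩
  constructor
  · calc t - t ^ 2 = |t| * |1 - t| := by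
          rw [abs_of_nonneg ht₀, abs_of_nonneg (by linarith)]; ring
      _ ≤ CZI X t := abs_mul_abs_one_sub_le_CZI ht₂
  · calc CZI X t ≤ (1 - t) ^ 2 := CZI_le_one_sub_sq ht₂
      _ = t ^ 2 - 2 * t + 1 := by ring

theorem stmt_2 (X : Type*) [NormedAddCommGroup X] [NormedSpace ℝ X]
    [CompleteSpace X] [Nontrivial X] :
    ∀ t ∈ Icc (0 : ℝ) (1 / 2), t - t ^ 2 ≤ CZI X t ∧ CZI X t ≤ t ^ 2 - 2 * t + 1 :=
  stmt_2_general X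
end

section
/- Let X be a nontrivial real Banach space. Then C_Z(X) = sup{ 2·Z_X(t) / (1 + t²) : t ∈ [0, 1] }. -/
open Set

/-- The Zbăganu constant `C_Z(X)`. -/
noncomputable def CZ (X : Type*) [NormedAddCommGroup X] [NormedSpace ℝ X] : ℝ :=
  sSup { r : ℝ | ∃ x y : X, (x, y) ≠ (0, 0) ∧
    r = ‖x + y‖ * ‖x - y‖ / (‖x‖ ^ 2 + ‖y‖ ^ 2) }

/-!
The Zbăganu ratio of `(x, y)` is invariant under scaling and swapping `x, y`. For unit vectors
`u, v` the ratio of `(u, t • v)` is `‖u + t v‖‖u − t v‖ / (1 + t²)`, so `2 Z_X(t) / (1 + t²) ≤ C_Z(X)`.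
Conversely, swapping so that `‖y‖ ≤ ‖x‖` and dividing by `‖x‖` brings any pair to the form
`(u, t • v)` with `t = ‖y‖ / ‖x‖ ∈ [0, 1]`.
-/

section

variable {X : Type*} [NormedAddCommGroup X]

noncomputable def zbaganuRatio (x y : X) : ℝ :=
  ‖x + y‖ * ‖x - y‖ / (‖x‖ ^ 2 + ‖y‖ ^ 2)

lemma zbaganuRatio_comm (x y : X) : zbaganuRatio x y = zbaganuRatio y x := by
  rw [zbaganuRatio, zbaganuRatio, add_comm x, norm_sub_rev, add_comm (‖x‖ ^ 2)]

lemma zbaganuRatio_le_two (x y : X) : zbaganuRatio x y ≤ 2 := by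
  rcases (add_nonneg (sq_nonneg ‖x‖) (sq_nonneg ‖y‖)).eq_or_lt with h | h
  · simp [zbaganuRatio, ← h]
  rw [zbaganuRatio, div_le_iff₀ h]
  nlinarith [norm_add_le x y, norm_sub_le x y, norm_nonneg (x + y), norm_nonneg (x - y),
    sq_nonneg (‖x‖ - ‖y‖)]

variable [NormedSpace ℝ X]

lemma zbaganuRatio_smul {c : ℝ} (hc : c ≠ 0) (x y : X) :
    zbaganuRatio (c • x) (c • y) = zbaganuRatio x y := by
  have hc2 : 0 < |c| ^ 2 := by positivity
  simp only [zbaganuRatio, ← smul_add, ← smul_sub, norm_smul, Real.norm_eq_abs, mul_pow]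
  rw [← mul_add, mul_mul_mul_comm, ← sq, mul_div_mul_left _ _ hc2.ne']

lemma zbaganuRatio_le_CZ {x y : X} (hxy : (x, y) ≠ (0, 0)) : zbaganuRatio x y ≤ CZ X :=
  le_csSup ⟨2, by rintro r ⟨x, y, -, rfl⟩; exact zbaganuRatio_le_two x y⟩ ⟨x, y, hxy, rfl⟩

lemma CZ_nonneg : 0 ≤ CZ X :=
  Real.sSup_nonneg <| by rintro r ⟨x, y, -, rfl⟩; positivity

lemma ZX_nonneg (t : ℝ) : 0 ≤ ZX X t :=
  Real.sSup_nonneg <| by rintro r ⟨x, y, -, -, rfl⟩; positivity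

lemma le_ZX (t : ℝ) {x y : X} (hx : ‖x‖ = 1) (hy : ‖y‖ = 1) :
    ‖x + t • y‖ * ‖x - t • y‖ / 2 ≤ ZX X t := by
  refine le_csSup ⟨(1 + |t|) ^ 2 / 2, ?_⟩ ⟨x, y, hx, hy, rfl⟩
  rintro r ⟨x, y, hx, hy, rfl⟩
  have hty : ‖t • y‖ = |t| := by rw [norm_smul, hy, Real.norm_eq_abs, mul_one]
  have hadd : ‖x + t • y‖ ≤ 1 + |t| := by simpa [hx, hty] using norm_add_le x (t • y)
  have hsub : ‖x - t • y‖ ≤ 1 + |t| := by simpa [hx, hty] using norm_sub_le x (t • y)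
  rw [sq]
  gcongr

lemma zbaganuRatio_smul_eq {x y : X} (hx : ‖x‖ = 1) (hy : ‖y‖ = 1) (t : ℝ) :
    zbaganuRatio x (t • y) = ‖x + t • y‖ * ‖x - t • y‖ / (1 + t ^ 2) := by
  rw [zbaganuRatio, hx, norm_smul, hy, Real.norm_eq_abs, mul_one, sq_abs, one_pow]

lemma two_mul_ZX_le (t : ℝ) : 2 * ZX X t ≤ CZ X * (1 + t ^ 2) := by
  have ht : 0 < 1 + t ^ 2 := by positivity
  rw [← le_div_iff₀' two_pos]
  refine Real.sSup_le ?_ (by have := CZ_nonneg (X := X); positivity)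
  rintro r ⟨x, y, hx, hy, rfl⟩
  have hxy : (x, t • y) ≠ (0, 0) := fun h ↦ by simp_all
  have := zbaganuRatio_le_CZ hxy
  rw [zbaganuRatio_smul_eq hx hy, div_le_iff₀ ht] at this
  linarith

lemma zbaganuRatio_smul_le {x y : X} (hx : ‖x‖ = 1) (hy : ‖y‖ = 1) (t : ℝ) :
    zbaganuRatio x (t • y) ≤ 2 * ZX X t / (1 + t ^ 2) := by
  rw [zbaganuRatio_smul_eq hx hy]
  gcongr ?_ / _
  linarith [le_ZX t hx hy]

lemma exists_eq_norm_smul_of_norm_eq_one {w : X} (hw : ‖w‖ = 1) (y : X) :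
    ∃ v : X, ‖v‖ = 1 ∧ y = ‖y‖ • v := by
  rcases eq_or_ne y 0 with rfl | hy
  · exact ⟨w, hw, by simp⟩
  · refine ⟨‖y‖⁻¹ • y, norm_smul_inv_norm hy, ?_⟩
    rw [smul_smul, mul_inv_cancel₀ (norm_ne_zero_iff.mpr hy), one_smul]

lemma exists_zbaganuRatio_le_ZX_of_norm_le {x y : X} (hx : x ≠ 0) (hyx : ‖y‖ ≤ ‖x‖) :
    ∃ t ∈ Icc (0 : ℝ) 1, zbaganuRatio x y ≤ 2 * ZX X t / (1 + t ^ 2) := by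
  have hx' : 0 < ‖x‖ := norm_pos_iff.mpr hx
  have hu : ‖‖x‖⁻¹ • x‖ = 1 := norm_smul_inv_norm hx
  obtain ⟨v, hv, hyv⟩ := exists_eq_norm_smul_of_norm_eq_one hu (‖x‖⁻¹ • y)
  refine ⟨‖y‖ / ‖x‖, ⟨by positivity, div_le_one_of_le₀ hyx hx'.le⟩, ?_⟩
  have ht : ‖‖x‖⁻¹ • y‖ = ‖y‖ / ‖x‖ := by
    rw [norm_smul, norm_inv, norm_norm, inv_mul_eq_div]
  rw [← zbaganuRatio_smul (inv_ne_zero hx'.ne') x y, hyv, ht]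
  exact zbaganuRatio_smul_le hu hv _

lemma exists_zbaganuRatio_le_ZX {x y : X} (hxy : (x, y) ≠ (0, 0)) :
    ∃ t ∈ Icc (0 : ℝ) 1, zbaganuRatio x y ≤ 2 * ZX X t / (1 + t ^ 2) := by
  rcases le_total ‖y‖ ‖x‖ with h | h
  · refine exists_zbaganuRatio_le_ZX_of_norm_le (fun hx ↦ hxy ?_) h
    subst hx
    rw [norm_zero, norm_le_zero_iff] at h
    rw [h]
  · rw [zbaganuRatio_comm]
    refine exists_zbaganuRatio_le_ZX_of_norm_le (fun hy ↦ hxy ?_) h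
    subst hy
    rw [norm_zero, norm_le_zero_iff] at h
    rw [h]

end

theorem stmt_6_general (X : Type*) [NormedAddCommGroup X] [NormedSpace ℝ X] :
    CZ X = sSup { r : ℝ | ∃ t ∈ Icc (0 : ℝ) 1, r = 2 * ZX X t / (1 + t ^ 2) } := by
  have hle_CZ : ∀ r ∈ { r : ℝ | ∃ t ∈ Icc (0 : ℝ) 1, r = 2 * ZX X t / (1 + t ^ 2) }, r ≤ CZ X := by
    rintro r ⟨t, -, rfl⟩
    exact div_le_of_le_mul₀ (by positivity) CZ_nonneg (two_mul_ZX_le t)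
  refine le_antisymm (Real.sSup_le ?_ (Real.sSup_nonneg ?_)) (Real.sSup_le hle_CZ CZ_nonneg)
  · rintro r ⟨x, y, hxy, rfl⟩
    obtain ⟨t, ht, hle⟩ := exists_zbaganuRatio_le_ZX hxy
    exact hle.trans (le_csSup ⟨CZ X, hle_CZ⟩ ⟨t, ht, rfl⟩)
  · rintro r ⟨t, -, rfl⟩
    have := ZX_nonneg (X := X) t
    positivity

theorem stmt_6 (X : Type*) [NormedAddCommGroup X] [NormedSpace ℝ X]
    [CompleteSpace X] [Nontrivial X] :
    CZ X = sSup { r : ℝ | ∃ t ∈ Icc (0 : ℝ) 1, r = 2 * ZX X t / (1 + t ^ 2) } :=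
  stmt_6_general X
end

section
/- Let 1 < p < ∞ and let X = ℓ^p be the Banach space of real sequences x = (x_i) with Σ|x_i|^p < ∞, normed by ‖x‖_p = (Σ|x_i|^p)^{1/p}. Then for every t ∈ [0, 1/2], C_Z^I(t) ≥ 2^{−2/p} · ((1 − t)^p + t^p)^{2/p}. -/
/-!
Isosceles orthogonality `‖x + y‖ = ‖x - y‖` forces `‖x‖, ‖y‖ ≤ ‖x + y‖`, so the set defining
`C_Z^I(t)` is bounded above by `(|t| + |1 - t|)²` and `C_Z^I(t)` dominates each of its elements.
In `ℓ^p` the unit vectors `e₀, e₁` are isosceles orthogonal with `‖e₀ ± e₁‖ = 2^{1/p}`, while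
`t e₀ + (1 - t) e₁` and `(1 - t) e₀ + t e₁` both have norm `((1 - t)^p + t^p)^{1/p}`; the quotient
for this pair is exactly the claimed lower bound.
-/

open Set ENNReal

section IsoscelesOrthogonal

variable {X : Type*} [NormedAddCommGroup X] [NormedSpace ℝ X] {x y : X}

lemma norm_le_norm_add_of_norm_add_eq_norm_sub (h : ‖x + y‖ = ‖x - y‖) : ‖x‖ ≤ ‖x + y‖ := by
  have key : (2 : ℝ) * ‖x‖ ≤ ‖x + y‖ + ‖x - y‖ := by
    calc (2 : ℝ) * ‖x‖ = ‖(x + y) + (x - y)‖ := by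
          rw [← Real.norm_two, ← norm_smul, two_smul]; congr 1; abel
      _ ≤ ‖x + y‖ + ‖x - y‖ := norm_add_le _ _
  linarith

lemma norm_le_norm_add_of_norm_add_eq_norm_sub' (h : ‖x + y‖ = ‖x - y‖) : ‖y‖ ≤ ‖x + y‖ := by
  rw [add_comm]
  exact norm_le_norm_add_of_norm_add_eq_norm_sub (by rw [add_comm, h, norm_sub_rev])

lemma norm_smul_add_smul_le_of_norm_add_eq_norm_sub (h : ‖x + y‖ = ‖x - y‖) (a b : ℝ) :
    ‖a • x + b • y‖ ≤ (|a| + |b|) * ‖x + y‖ :=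
  calc ‖a • x + b • y‖ ≤ |a| * ‖x‖ + |b| * ‖y‖ := by
        simpa only [norm_smul, Real.norm_eq_abs] using norm_add_le (a • x) (b • y)
    _ ≤ |a| * ‖x + y‖ + |b| * ‖x + y‖ := by
        gcongr
        exacts [norm_le_norm_add_of_norm_add_eq_norm_sub h,
          norm_le_norm_add_of_norm_add_eq_norm_sub' h]
    _ = (|a| + |b|) * ‖x + y‖ := by ring

variable (X) in
lemma bddAbove_CZI_set (t : ℝ) :
    BddAbove { r : ℝ | ∃ x y : X, (x, y) ≠ (0, 0) ∧ ‖x + y‖ = ‖x - y‖ ∧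
      r = ‖t • x + (1 - t) • y‖ * ‖(1 - t) • x + t • y‖ / ‖x + y‖ ^ 2 } := by
  refine ⟨(|t| + |1 - t|) ^ 2, ?_⟩
  rintro r ⟨x, y, -, h, rfl⟩
  refine div_le_of_le_mul₀ (by positivity) (by positivity) ?_
  calc ‖t • x + (1 - t) • y‖ * ‖(1 - t) • x + t • y‖
      ≤ ((|t| + |1 - t|) * ‖x + y‖) * ((|1 - t| + |t|) * ‖x + y‖) := by
        gcongr <;> exact norm_smul_add_smul_le_of_norm_add_eq_norm_sub h _ _
    _ = (|t| + |1 - t|) ^ 2 * ‖x + y‖ ^ 2 := by ring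

lemma le_CZI (t : ℝ) (hxy : (x, y) ≠ (0, 0)) (h : ‖x + y‖ = ‖x - y‖) :
    ‖t • x + (1 - t) • y‖ * ‖(1 - t) • x + t • y‖ / ‖x + y‖ ^ 2 ≤ CZI X t :=
  le_csSup (bddAbove_CZI_set X t) ⟨x, y, hxy, h, rfl⟩

end IsoscelesOrthogonal

lemma lp.norm_single_add_single {α : Type*} [DecidableEq α] {E : α → Type*}
    [∀ i, NormedAddCommGroup (E i)] (p : ℝ≥0∞) [Fact (1 ≤ p)] (hp : p ≠ ⊤) {i j : α} (hij : i ≠ j)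
    (a : E i) (b : E j) :
    ‖lp.single p i a + lp.single p j b‖ = (‖a‖ ^ p.toReal + ‖b‖ ^ p.toReal) ^ p.toReal⁻¹ := by
  have hp₀ : 0 < p.toReal := ENNReal.toReal_pos (zero_lt_one.trans_le Fact.out).ne' hp
  let f : ∀ k, E k := Pi.single i a + Pi.single j b
  have hfi : f i = a := by simp [f, Pi.single_eq_of_ne hij]
  have hfj : f j = b := by simp [f, Pi.single_eq_of_ne hij.symm]
  have hsum := lp.norm_sum_single hp₀ f {i, j}
  rw [Finset.sum_pair hij, Finset.sum_pair hij, hfi, hfj] at hsum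
  rw [← hsum, Real.rpow_rpow_inv (norm_nonneg _) hp₀.ne']

theorem stmt_8_general (p : ℝ≥0∞) [Fact (1 ≤ p)] (hp2 : p ≠ ⊤) :
    ∀ t ∈ Icc (0 : ℝ) (1 / 2),
      (2 : ℝ) ^ (-(2 / p.toReal)) *
          ((1 - t) ^ p.toReal + t ^ p.toReal) ^ (2 / p.toReal) ≤
        CZI (lp (fun _ : ℕ => ℝ) p) t := by
  rintro t ⟨ht₀, ht₁⟩
  set q := p.toReal
  set e₀ : lp (fun _ : ℕ => ℝ) p := lp.single p 0 1
  set e₁ : lp (fun _ : ℕ => ℝ) p := lp.single p 1 1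
  have hnorm (a b : ℝ) : ‖a • e₀ + b • e₁‖ = (|a| ^ q + |b| ^ q) ^ q⁻¹ := by
    have := lp.norm_single_add_single (E := fun _ : ℕ => ℝ) p hp2 zero_ne_one a b
    rw [Real.norm_eq_abs, Real.norm_eq_abs] at this
    simp only [e₀, e₁, ← lp.single_smul, smul_eq_mul, mul_one]
    exact this
  have hsum : ‖e₀ + e₁‖ = 2 ^ q⁻¹ := by
    simpa [one_add_one_eq_two] using hnorm 1 1
  have hdiff : ‖e₀ - e₁‖ = 2 ^ q⁻¹ := by
    simpa [one_add_one_eq_two, ← sub_eq_add_neg] using hnorm 1 (-1)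
  have hne : (e₀, e₁) ≠ (0, 0) := by
    intro h
    have : e₀ 0 = 1 := lp.single_apply_self (E := fun _ : ℕ => ℝ) p 0 1
    rw [(Prod.mk.inj h).1] at this
    simp at this
  refine le_of_eq_of_le ?_ (le_CZI t hne (hsum.trans hdiff.symm))
  rw [hnorm, hnorm, hsum, abs_of_nonneg ht₀, abs_of_nonneg (by linarith), add_comm (t ^ q)]
  have hB : 0 ≤ (1 - t) ^ q + t ^ q :=
    add_nonneg (Real.rpow_nonneg (by linarith) q) (Real.rpow_nonneg ht₀ q)
  rw [← sq, ← Real.rpow_natCast, ← Real.rpow_natCast, ← Real.rpow_mul hB,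
    ← Real.rpow_mul zero_le_two, Real.rpow_neg zero_le_two, inv_mul_eq_div]
  congr 2 <;> (push_cast; ring)

theorem stmt_8 (p : ℝ≥0∞) [Fact (1 ≤ p)] (hp1 : 1 < p) (hp2 : p ≠ ⊤) :
    ∀ t ∈ Icc (0 : ℝ) (1 / 2),
      (2 : ℝ) ^ (-(2 / p.toReal)) *
          ((1 - t) ^ p.toReal + t ^ p.toReal) ^ (2 / p.toReal) ≤
        CZI (lp (fun _ : ℕ => ℝ) p) t :=
  stmt_8_general p hp2
end

section
/- Let X = ℝ² equipped with the ℓ¹ norm ‖(a, b)‖₁ = |a| + |b|. Then C_Z(X) = 2. -/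
/- The bound `C_Z ≤ 2` holds in every normed space: `‖x ± y‖ ≤ ‖x‖ + ‖y‖` and
`(‖x‖ + ‖y‖)² ≤ 2 (‖x‖² + ‖y‖²)`. In `ℓ¹(2)` the unit vectors `e₀, e₁` attain it, since
`‖e₀ + e₁‖₁ = ‖e₀ - e₁‖₁ = 2`. -/

open Set

theorem zbaganu_ratio_le_two {X : Type*} [SeminormedAddCommGroup X] (x y : X) :
    ‖x + y‖ * ‖x - y‖ / (‖x‖ ^ 2 + ‖y‖ ^ 2) ≤ 2 := by
  refine div_le_of_le_mul₀ (by positivity) zero_le_two ?_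
  calc ‖x + y‖ * ‖x - y‖ ≤ (‖x‖ + ‖y‖) * (‖x‖ + ‖y‖) :=
        mul_le_mul (norm_add_le x y) (norm_sub_le x y) (norm_nonneg _) (by positivity)
    _ ≤ 2 * (‖x‖ ^ 2 + ‖y‖ ^ 2) := by nlinarith [sq_nonneg (‖x‖ - ‖y‖)]

section

variable {X : Type*} [NormedAddCommGroup X] [NormedSpace ℝ X]

theorem CZ_le_two : CZ X ≤ 2 :=
  Real.sSup_le (by rintro _ ⟨x, y, -, rfl⟩; exact zbaganu_ratio_le_two x y) zero_le_two

theorem CZ_eq_two_of_norm_add_eq_norm_sub_eq_two {x y : X} (hx : ‖x‖ = 1) (hy : ‖y‖ = 1)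
    (hadd : ‖x + y‖ = 2) (hsub : ‖x - y‖ = 2) : CZ X = 2 := by
  refine le_antisymm CZ_le_two (le_csSup ⟨2, ?_⟩ ⟨x, y, ?_, ?_⟩)
  · rintro _ ⟨x, y, -, rfl⟩
    exact zbaganu_ratio_le_two x y
  · rintro ⟨⟩
    simp at hx
  · rw [hx, hy, hadd, hsub]
    norm_num

end

theorem stmt_9 : CZ (PiLp 1 (fun _ : Fin 2 => ℝ)) = 2 := by
  refine CZ_eq_two_of_norm_add_eq_norm_sub_eq_two (x := PiLp.single 1 (0 : Fin 2) (1 : ℝ))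
    (y := PiLp.single 1 (1 : Fin 2) (1 : ℝ)) ?_ ?_ ?_ ?_ <;>
  norm_num [PiLp.norm_eq_of_L1, Fin.sum_univ_two]
end

section
/- Let X be a finite-dimensional real Banach space with dim X ≥ 2. If C_Z^I(t₀) = t₀² − 2t₀ + 1 for some t₀ ∈ [0, 1/2), then X is not uniformly non-square, i.e., for every δ ∈ (0, 1) there exist x, y ∈ S_X with ‖x + y‖ > 2(1 − δ) and ‖x − y‖ > 2(1 − δ). -/
open Set

/-!
By homogeneity, `C_Z^I(t)` is the maximum of `‖t•x + (1-t)•y‖ * ‖(1-t)•x + t•y‖` over the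
compact set of pairs with `‖x + y‖ = ‖x - y‖ = 1`, and writing
`t•x + (1-t)•y = ½(x+y) + ½(1-2t)(y-x)` shows that each factor is at most `1 - t`.
If the maximum equals `(1 - t)²`, both factors of a maximising pair equal `1 - t`, and then
`t•x + (1-t)•y = t(x+y) + (1-2t)y` forces `‖y‖ ≥ 1`, and symmetrically `‖x‖ ≥ 1`.
The unit vectors `u = x + y`, `v = y - x` then satisfy `‖u + v‖ = 2‖y‖ ≥ 2` and
`‖u - v‖ = 2‖x‖ ≥ 2`: the unit sphere contains an exact square.
-/

lemma eq_of_mul_eq_sq {a b c : ℝ} (ha : 0 ≤ a) (hb : 0 ≤ b) (hac : a ≤ c) (hbc : b ≤ c)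
    (h : a * b = c ^ 2) : a = c ∧ b = c := by
  constructor <;> nlinarith [mul_le_mul hac hbc hb (ha.trans hac)]

section IsoscelesConstant

variable {X : Type*} [NormedAddCommGroup X] [NormedSpace ℝ X]

def isoUnitPairs (X : Type*) [NormedAddCommGroup X] : Set (X × X) :=
  {p | ‖p.1 + p.2‖ = 1 ∧ ‖p.1 - p.2‖ = 1}

noncomputable def czProduct (t : ℝ) (p : X × X) : ℝ :=
  ‖t • p.1 + (1 - t) • p.2‖ * ‖(1 - t) • p.1 + t • p.2‖

lemma continuous_czProduct (t : ℝ) : Continuous (czProduct (X := X) t) := by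
  unfold czProduct; fun_prop

lemma czProduct_smul (t c : ℝ) (p : X × X) : czProduct t (c • p) = c ^ 2 * czProduct t p := by
  have h₁ : t • (c • p.1) + (1 - t) • (c • p.2) = c • (t • p.1 + (1 - t) • p.2) := by module
  have h₂ : (1 - t) • (c • p.1) + t • (c • p.2) = c • ((1 - t) • p.1 + t • p.2) := by module
  simp only [czProduct, Prod.smul_fst, Prod.smul_snd, h₁, h₂, norm_smul, Real.norm_eq_abs]
  rw [← sq_abs c]
  ring

lemma isCompact_isoUnitPairs [FiniteDimensional ℝ X] : IsCompact (isoUnitPairs X) := by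
  refine Metric.isCompact_of_isClosed_isBounded ?_ ?_
  · exact (isClosed_eq (by fun_prop) continuous_const).inter
      (isClosed_eq (by fun_prop) continuous_const)
  · refine (Metric.isBounded_closedBall (x := (0 : X × X)) (r := 1)).subset ?_
    rintro ⟨x, y⟩ ⟨hadd, hsub⟩
    have hx : ‖(2 : ℝ) • x‖ ≤ 2 := by
      rw [show (2 : ℝ) • x = (x + y) + (x - y) by module]
      linarith [norm_add_le (x + y) (x - y)]
    have hy : ‖(2 : ℝ) • y‖ ≤ 2 := by
      rw [show (2 : ℝ) • y = (x + y) - (x - y) by module]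
      linarith [norm_sub_le (x + y) (x - y)]
    rw [norm_smul, Real.norm_two] at hx hy
    rw [mem_closedBall_zero_iff, Prod.norm_def]
    exact max_le (by linarith) (by linarith)

lemma CZI_eq_sSup_image (t : ℝ) : CZI X t = sSup (czProduct t '' isoUnitPairs X) := by
  unfold CZI
  congr 1
  ext r
  constructor
  · rintro ⟨x, y, hne, hiso, rfl⟩
    have hs : 0 < ‖x + y‖ := by
      refine norm_pos_iff.mpr fun h0 => hne ?_
      have h0' : x - y = 0 := norm_eq_zero.mp (hiso ▸ norm_eq_zero.mpr h0)
      have hx : x = 0 := by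
        have : (2 : ℝ) • x = 0 := by
          rw [show (2 : ℝ) • x = (x + y) + (x - y) by module, h0, h0', add_zero]
        simpa using this
      rw [hx, zero_add] at h0
      rw [hx, h0]
    refine ⟨‖x + y‖⁻¹ • (x, y), ⟨?_, ?_⟩, ?_⟩
    · simp only [Prod.smul_fst, Prod.smul_snd, ← smul_add, norm_smul, norm_inv, norm_norm]
      exact inv_mul_cancel₀ hs.ne'
    · simp only [Prod.smul_fst, Prod.smul_snd, ← smul_sub, norm_smul, norm_inv, norm_norm, ← hiso]
      exact inv_mul_cancel₀ hs.ne'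
    · rw [czProduct_smul, czProduct, inv_pow, inv_mul_eq_div]
  · rintro ⟨⟨x, y⟩, ⟨hadd, hsub⟩, rfl⟩
    refine ⟨x, y, fun h0 => ?_, hadd.trans hsub.symm, by rw [hadd]; simp [czProduct]⟩
    simp_all

lemma exists_czProduct_eq_CZI [FiniteDimensional ℝ X] {t : ℝ} (ht : CZI X t ≠ 0) :
    ∃ p ∈ isoUnitPairs X, czProduct t p = CZI X t := by
  rw [CZI_eq_sSup_image] at ht ⊢
  have hne : (czProduct t '' isoUnitPairs X).Nonempty := by
    by_contra hempty
    rw [not_nonempty_iff_eq_empty.mp hempty, Real.sSup_empty] at ht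
    exact ht rfl
  exact (isCompact_isoUnitPairs.image (continuous_czProduct t)).sSup_mem hne

lemma norm_convexComb_le {t : ℝ} (ht : t ≤ 1 / 2) (x y : X) :
    ‖t • x + (1 - t) • y‖ ≤ (‖x + y‖ + (1 - 2 * t) * ‖x - y‖) / 2 := by
  have h := norm_add_le ((1 / 2 : ℝ) • (x + y)) (((1 - 2 * t) / 2) • (y - x))
  rw [show (1 / 2 : ℝ) • (x + y) + ((1 - 2 * t) / 2) • (y - x) = t • x + (1 - t) • y by module,
    norm_smul, norm_smul, norm_sub_rev, Real.norm_of_nonneg (by norm_num),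
    Real.norm_of_nonneg (by linarith)] at h
  linarith

lemma norm_convexCombs_le {t : ℝ} (ht : t ≤ 1 / 2) {x y : X} (hadd : ‖x + y‖ = 1)
    (hsub : ‖x - y‖ = 1) :
    ‖t • x + (1 - t) • y‖ ≤ 1 - t ∧ ‖(1 - t) • x + t • y‖ ≤ 1 - t := by
  have hxy := norm_convexComb_le ht x y
  have hyx := norm_convexComb_le ht y x
  rw [hadd, hsub] at hxy
  rw [add_comm y x, norm_sub_rev, hadd, hsub, add_comm] at hyx
  constructor <;> linarith

lemma one_le_norm_of_norm_convexComb_eq {t : ℝ} (ht₀ : 0 ≤ t) (ht : t < 1 / 2) {x y : X}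
    (hadd : ‖x + y‖ = 1) (hmix : ‖t • x + (1 - t) • y‖ = 1 - t) : 1 ≤ ‖y‖ := by
  have h := norm_add_le (t • (x + y)) ((1 - 2 * t) • y)
  rw [show t • (x + y) + (1 - 2 * t) • y = t • x + (1 - t) • y by module, hmix,
    norm_smul, norm_smul, hadd, Real.norm_of_nonneg ht₀,
    Real.norm_of_nonneg (by linarith)] at h
  nlinarith

end IsoscelesConstant

theorem stmt_12_general (X : Type*) [NormedAddCommGroup X] [NormedSpace ℝ X]
    [FiniteDimensional ℝ X]
    (t₀ : ℝ) (ht₀ : t₀ ∈ Ico (0 : ℝ) (1 / 2))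
    (h : CZI X t₀ = t₀ ^ 2 - 2 * t₀ + 1) :
    ∀ δ ∈ Ioo (0 : ℝ) 1, ∃ x y : X, ‖x‖ = 1 ∧ ‖y‖ = 1 ∧
      2 * (1 - δ) < ‖x + y‖ ∧ 2 * (1 - δ) < ‖x - y‖ := by
  intro δ hδ
  obtain ⟨ht0, ht⟩ := ht₀
  obtain ⟨⟨x, y⟩, ⟨hadd, hsub⟩, hmax⟩ :=
    exists_czProduct_eq_CZI (X := X) (t := t₀) (by rw [h]; nlinarith)
  dsimp only at hadd hsub
  obtain ⟨hA, hB⟩ := norm_convexCombs_le ht.le hadd hsub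
  obtain ⟨hAeq, hBeq⟩ := eq_of_mul_eq_sq (c := 1 - t₀) (norm_nonneg _) (norm_nonneg _) hA hB
    (by rw [show _ * _ = _ from hmax.trans h]; ring)
  rw [add_comm] at hBeq
  have hy := one_le_norm_of_norm_convexComb_eq ht0 ht hadd hAeq
  have hx := one_le_norm_of_norm_convexComb_eq ht0 ht (by rwa [add_comm]) hBeq
  refine ⟨x + y, y - x, hadd, by rwa [norm_sub_rev], ?_, ?_⟩
  · rw [show x + y + (y - x) = (2 : ℝ) • y by module, norm_smul, Real.norm_two]
    linarith [hδ.1]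
  · rw [show x + y - (y - x) = (2 : ℝ) • x by module, norm_smul, Real.norm_two]
    linarith [hδ.1]

theorem stmt_12 (X : Type*) [NormedAddCommGroup X] [NormedSpace ℝ X]
    [FiniteDimensional ℝ X] (hdim : 2 ≤ Module.finrank ℝ X)
    (t₀ : ℝ) (ht₀ : t₀ ∈ Ico (0 : ℝ) (1 / 2))
    (h : CZI X t₀ = t₀ ^ 2 - 2 * t₀ + 1) :
    ∀ δ ∈ Ioo (0 : ℝ) 1, ∃ x y : X, ‖x‖ = 1 ∧ ‖y‖ = 1 ∧
      2 * (1 - δ) < ‖x + y‖ ∧ 2 * (1 - δ) < ‖x - y‖ :=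
  stmt_12_general X t₀ ht₀ h
end

section
/- Let X be a real Banach space with dim X ≥ 2. Then J(X) = sup{ ‖x + y‖ : x, y ∈ S_X, x ⊥_I y }, i.e., the James constant equals the supremum of ‖x + y‖ over pairs of isosceles-orthogonal unit vectors. -/
open Set

/-! For `x ⊥_I y` the minimum in `J(X)` is `‖x + y‖`, which gives one inequality. Conversely, take
unit `x, y` with `‖x - y‖ ≤ ‖x + y‖` and move `z` from `y` to `-x` along the normalized segment:
`‖x + z‖ - ‖x - z‖` goes from a nonnegative value to `-2`, so it vanishes somewhere. There `y` is
a normalized nonnegative combination of `x` and `z`, and such combinations are no farther from `x`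
than `z` is, so `‖x - y‖ ≤ ‖x - z‖ = ‖x + z‖`. -/

/-- The James constant `J(X)`. -/
noncomputable def JamesConst (X : Type*) [NormedAddCommGroup X] [NormedSpace ℝ X] : ℝ :=
  sSup { r : ℝ | ∃ x y : X, ‖x‖ = 1 ∧ ‖y‖ = 1 ∧ r = min ‖x + y‖ ‖x - y‖ }

theorem norm_add_le_two {E : Type*} [SeminormedAddGroup E] {x y : E} (hx : ‖x‖ = 1)
    (hy : ‖y‖ = 1) : ‖x + y‖ ≤ 2 :=
  (norm_add_le x y).trans_eq (by rw [hx, hy]; norm_num)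

section Isosceles

variable {E : Type*} [NormedAddCommGroup E] [NormedSpace ℝ E]

theorem norm_sub_smul_inv_norm_le {x w : E} (hx : ‖x‖ = 1) (hw : ‖w‖ = 1) {a b : ℝ}
    (ha : 0 ≤ a) (hb : 0 ≤ b) (hv : a • x + b • w ≠ 0) :
    ‖x - ‖a • x + b • w‖⁻¹ • (a • x + b • w)‖ ≤ ‖x - w‖ := by
  set v := a • x + b • w with hv_def
  set u := ‖v‖⁻¹ • v
  have hv_pos : 0 < ‖v‖ := norm_pos_iff.2 hv
  have hu : ‖u‖ = 1 := norm_smul_inv_norm hv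
  have hvu : ‖v‖ • u = v := smul_inv_smul₀ hv_pos.ne' v
  have hv_le : ‖v‖ ≤ a + b := by
    simpa [norm_smul, hx, hw, abs_of_nonneg ha, abs_of_nonneg hb] using norm_add_le (a • x) (b • w)
  -- `v = (a + b) • w + a • (x - w)`, so `v` is not much shorter than `(a + b) • w`
  have hv_ge : a + b - a * ‖x - w‖ ≤ ‖v‖ := by
    have h := norm_sub_norm_le ((a + b) • w) (a • (w - x))
    rw [norm_smul, norm_smul, hw, norm_sub_rev, Real.norm_of_nonneg (by linarith),
      Real.norm_of_nonneg ha, show (a + b) • w - a • (w - x) = v by module] at h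
    linarith
  have key : (a + b) • (x - u) = b • (x - w) + (‖v‖ - (a + b)) • u := by
    rw [sub_smul, hvu, hv_def]; module
  have h : (a + b) * ‖x - u‖ ≤ (a + b) * ‖x - w‖ :=
    calc (a + b) * ‖x - u‖ = ‖b • (x - w) + (‖v‖ - (a + b)) • u‖ := by
          rw [← key, norm_smul, Real.norm_of_nonneg (by linarith)]
      _ ≤ b * ‖x - w‖ + (a + b - ‖v‖) := by
          refine (norm_add_le _ _).trans_eq ?_
          rw [norm_smul, norm_smul, hu, Real.norm_of_nonneg hb, Real.norm_of_nonpos (by linarith)]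
          ring
      _ ≤ (a + b) * ‖x - w‖ := by linarith
  exact le_of_mul_le_mul_left h (by linarith)

theorem sub_smul_sub_smul_ne_zero {x y : E} (hxy : ‖x‖ = ‖y‖) (hyx : y ≠ x) (t : ℝ) :
    (1 - t) • y - t • x ≠ 0 := by
  intro h
  rw [sub_eq_zero] at h
  have hx : x ≠ 0 := by
    rintro rfl
    exact hyx (norm_eq_zero.1 (hxy.symm.trans norm_zero))
  have ht : |1 - t| = |t| := by
    have := congrArg norm h
    rw [norm_smul, norm_smul, ← hxy, Real.norm_eq_abs, Real.norm_eq_abs] at this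
    exact mul_right_cancel₀ (norm_ne_zero_iff.2 hx) this
  have ht : t = 1 / 2 := by
    rcases abs_eq_abs.1 ht with h | h <;> linarith
  subst ht
  rw [show (1 : ℝ) - 1 / 2 = 1 / 2 by norm_num] at h
  exact hyx (smul_right_injective E (by norm_num) h)

theorem exists_norm_add_eq_norm_sub_of_norm_sub_le {x y : E} (hx : ‖x‖ = 1) (hy : ‖y‖ = 1)
    (hyx : y ≠ x) (hle : ‖x - y‖ ≤ ‖x + y‖) :
    ∃ z : E, ‖z‖ = 1 ∧ ‖x + z‖ = ‖x - z‖ ∧ ‖x - y‖ ≤ ‖x + z‖ := by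
  set v : ℝ → E := fun t ↦ (1 - t) • y - t • x
  have hv : ∀ t, v t ≠ 0 := sub_smul_sub_smul_ne_zero (hx.trans hy.symm) hyx
  set z : ℝ → E := fun t ↦ ‖v t‖⁻¹ • v t
  have hz : Continuous z :=
    ((by fun_prop : Continuous fun t ↦ ‖v t‖).inv₀ fun t ↦ norm_ne_zero_iff.2 (hv t)).smul
      (by fun_prop)
  have hz_norm : ∀ t, ‖z t‖ = 1 := fun t ↦ norm_smul_inv_norm (hv t)
  have hz0 : z 0 = y := by simp [z, v, hy]
  have hz1 : z 1 = -x := by simp [z, v, hx]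
  obtain ⟨t, ⟨ht0, ht1⟩, hzt⟩ : ∃ t ∈ Ico (0 : ℝ) 1, ‖x + z t‖ - ‖x - z t‖ = 0 := by
    refine intermediate_value_Ico' zero_le_one
      ((continuous_const.add hz).norm.sub (continuous_const.sub hz).norm).continuousOn ⟨?_, ?_⟩
    · show ‖x + z 1‖ - ‖x - z 1‖ < 0
      rw [hz1, add_neg_cancel, sub_neg_eq_add, ← two_smul ℝ x, norm_smul, hx]
      norm_num
    · simpa [hz0] using hle
  rw [sub_eq_zero] at hzt
  have hw : t • x + ‖v t‖ • z t = (1 - t) • y := by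
    simp only [z, smul_inv_smul₀ (norm_ne_zero_iff.2 (hv t)), v]
    module
  have h := norm_sub_smul_inv_norm_le hx (hz_norm t) ht0 (norm_nonneg (v t))
    (by rw [hw]; exact smul_ne_zero (by linarith) (norm_ne_zero_iff.1 (by simp [hy])))
  rw [hw, norm_smul, hy, mul_one, Real.norm_of_nonneg (by linarith),
    inv_smul_smul₀ (by linarith), ← hzt] at h
  exact ⟨z t, hz_norm t, hzt, h⟩

theorem exists_min_norm_add_norm_sub_le {x y : E} (hx : ‖x‖ = 1) (hy : ‖y‖ = 1) (hyx : y ≠ x)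
    (hyx' : y ≠ -x) :
    ∃ z : E, ‖z‖ = 1 ∧ ‖x + z‖ = ‖x - z‖ ∧ min ‖x + y‖ ‖x - y‖ ≤ ‖x + z‖ := by
  rcases le_total ‖x - y‖ ‖x + y‖ with hle | hle
  · obtain ⟨z, hz, hxz, h⟩ := exists_norm_add_eq_norm_sub_of_norm_sub_le hx hy hyx hle
    exact ⟨z, hz, hxz, (min_le_right _ _).trans h⟩
  · have hny : -y ≠ x := fun h ↦ hyx' (neg_eq_iff_eq_neg.1 h)
    obtain ⟨z, hz, hxz, h⟩ := exists_norm_add_eq_norm_sub_of_norm_sub_le hx (by rwa [norm_neg])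
      hny (by rwa [sub_neg_eq_add, ← sub_eq_add_neg])
    rw [sub_neg_eq_add] at h
    exact ⟨z, hz, hxz, (min_le_left _ _).trans h⟩

end Isosceles

theorem stmt_15_general (X : Type*) [NormedAddCommGroup X] [NormedSpace ℝ X] :
    JamesConst X =
      sSup { r : ℝ | ∃ x y : X, ‖x‖ = 1 ∧ ‖y‖ = 1 ∧ ‖x + y‖ = ‖x - y‖ ∧
        r = ‖x + y‖ } := by
  set B := { r : ℝ | ∃ x y : X, ‖x‖ = 1 ∧ ‖y‖ = 1 ∧ ‖x + y‖ = ‖x - y‖ ∧ r = ‖x + y‖ }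
  have hA : BddAbove { r : ℝ | ∃ x y : X, ‖x‖ = 1 ∧ ‖y‖ = 1 ∧ r = min ‖x + y‖ ‖x - y‖ } :=
    ⟨2, by rintro _ ⟨x, y, hx, hy, rfl⟩; exact (min_le_left _ _).trans (norm_add_le_two hx hy)⟩
  have hB : BddAbove B := ⟨2, by rintro _ ⟨x, y, hx, hy, -, rfl⟩; exact norm_add_le_two hx hy⟩
  have hB₀ : 0 ≤ sSup B := Real.sSup_nonneg (by rintro _ ⟨x, y, -, -, -, rfl⟩; positivity)
  -- Either set may be empty, so both bounds go through `Real.sSup_le`, which allows `sSup ∅ = 0`.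
  apply le_antisymm
  · refine Real.sSup_le ?_ hB₀
    rintro _ ⟨x, y, hx, hy, rfl⟩
    by_cases hyx : y = x ∨ y = -x
    · rcases hyx with rfl | rfl <;> simp [hB₀]
    · obtain ⟨hyx, hyx'⟩ := not_or.1 hyx
      obtain ⟨z, hz, hxz, h⟩ := exists_min_norm_add_norm_sub_le hx hy hyx hyx'
      exact h.trans (le_csSup hB ⟨x, z, hx, hz, hxz, rfl⟩)
  · refine Real.sSup_le ?_ (Real.sSup_nonneg ?_)
    · rintro _ ⟨x, y, hx, hy, hxy, rfl⟩
      exact le_csSup hA ⟨x, y, hx, hy, by rw [hxy, min_self]⟩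
    · rintro _ ⟨x, y, -, -, rfl⟩
      positivity

theorem stmt_15 (X : Type*) [NormedAddCommGroup X] [NormedSpace ℝ X]
    [CompleteSpace X] (hdim : 2 ≤ Module.rank ℝ X) :
    JamesConst X =
      sSup { r : ℝ | ∃ x y : X, ‖x‖ = 1 ∧ ‖y‖ = 1 ∧ ‖x + y‖ = ‖x - y‖ ∧
        r = ‖x + y‖ } :=
  stmt_15_general X
end

section
/- Let X be a real normed space and let x, y ∈ X with x ⊥_I y, and let α ∈ ℝ. (i) If |α| ≥ 1, then ‖x + y‖ ≤ ‖x + α·y‖ and ‖x + α·y‖ ≤ |α|·‖x + y‖. (ii) If |α| ≤ 1, then |α|·‖x + y‖ ≤ ‖x + α·y‖ and ‖x + α·y‖ ≤ ‖x + y‖. -/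
/-!
The function `t ↦ ‖x + t • y‖` is convex on `ℝ`, and `x ⊥_I y` says exactly that it takes the same
value at `t = -1` and `t = 1`. A convex function with `f (-1) = f 1` lies below `f 1` on `[-1, 1]`
and above it outside, which gives the two comparisons with `‖x + y‖`. The bounds involving `|α|`
follow by applying these to the pair `y ⊥_I x` and the scalar `α⁻¹`, since
`‖x + α • y‖ = |α| * ‖y + α⁻¹ • x‖`.
-/

open Set

section ConvexOnSymmetric

variable {f : ℝ → ℝ} {t : ℝ}

theorem ConvexOn.le_of_abs_le_one (hf : ConvexOn ℝ univ f) (hsymm : f (-1) = f 1)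
    (ht : |t| ≤ 1) : f t ≤ f 1 := by
  have hseg : t ∈ segment ℝ (-1 : ℝ) 1 := by
    rw [segment_eq_Icc (by norm_num)]
    exact abs_le.mp ht
  simpa [hsymm] using hf.le_on_segment (mem_univ _) (mem_univ _) hseg

theorem ConvexOn.le_of_one_le_abs (hf : ConvexOn ℝ univ f) (hsymm : f (-1) = f 1)
    (ht : 1 ≤ |t|) : f 1 ≤ f t := by
  rcases le_abs'.mp ht with ht | ht
  · rw [← hsymm]
    exact hf.le_left_of_right_le'' (mem_univ _) (mem_univ _) ht (by norm_num) hsymm.ge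
  · exact hf.le_right_of_left_le'' (mem_univ _) (mem_univ _) (by norm_num) ht hsymm.le

end ConvexOnSymmetric

section IsoscelesOrthogonal

variable {X : Type*} [NormedAddCommGroup X] [NormedSpace ℝ X] {x y : X} {α : ℝ}

theorem convexOn_norm_add_smul (x y : X) : ConvexOn ℝ univ fun t : ℝ ↦ ‖x + t • y‖ :=
  (convexOn_univ_norm.translate_right x).comp_linearMap (LinearMap.toSpanSingleton ℝ X y)

theorem norm_add_smul_eq_abs_mul_norm_add_inv_smul (hα : α ≠ 0) :
    ‖x + α • y‖ = |α| * ‖y + α⁻¹ • x‖ := by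
  rw [← Real.norm_eq_abs, ← norm_smul, smul_add, smul_inv_smul₀ hα, add_comm]

theorem norm_add_neg_one_smul_eq (hxy : ‖x + y‖ = ‖x - y‖) :
    ‖x + (-1 : ℝ) • y‖ = ‖x + (1 : ℝ) • y‖ := by
  rw [neg_one_smul, one_smul, ← sub_eq_add_neg, hxy]

theorem norm_add_smul_le_of_abs_le_one (hxy : ‖x + y‖ = ‖x - y‖) (hα : |α| ≤ 1) :
    ‖x + α • y‖ ≤ ‖x + y‖ := by
  simpa using (convexOn_norm_add_smul x y).le_of_abs_le_one (norm_add_neg_one_smul_eq hxy) hα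

theorem norm_add_le_norm_add_smul_of_one_le_abs (hxy : ‖x + y‖ = ‖x - y‖) (hα : 1 ≤ |α|) :
    ‖x + y‖ ≤ ‖x + α • y‖ := by
  simpa using (convexOn_norm_add_smul x y).le_of_one_le_abs (norm_add_neg_one_smul_eq hxy) hα

theorem norm_add_smul_le_abs_mul_of_one_le_abs (hxy : ‖x + y‖ = ‖x - y‖) (hα : 1 ≤ |α|) :
    ‖x + α • y‖ ≤ |α| * ‖x + y‖ := by
  have hα₀ : α ≠ 0 := abs_pos.mp (one_pos.trans_le hα)
  have hinv : |α⁻¹| ≤ 1 := by rw [abs_inv]; exact inv_le_one_of_one_le₀ hα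
  rw [norm_add_smul_eq_abs_mul_norm_add_inv_smul hα₀, add_comm x]
  gcongr
  exact norm_add_smul_le_of_abs_le_one (by rwa [add_comm, norm_sub_rev]) hinv

theorem abs_mul_le_norm_add_smul_of_abs_le_one (hxy : ‖x + y‖ = ‖x - y‖) (hα : |α| ≤ 1) :
    |α| * ‖x + y‖ ≤ ‖x + α • y‖ := by
  rcases eq_or_ne α 0 with rfl | hα₀
  · simp
  have hinv : 1 ≤ |α⁻¹| := by rw [abs_inv]; exact one_le_inv₀ (abs_pos.mpr hα₀) |>.mpr hα
  rw [norm_add_smul_eq_abs_mul_norm_add_inv_smul hα₀, add_comm x]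
  gcongr
  exact norm_add_le_norm_add_smul_of_one_le_abs (by rwa [add_comm, norm_sub_rev]) hinv

end IsoscelesOrthogonal

theorem stmt_16 (X : Type*) [NormedAddCommGroup X] [NormedSpace ℝ X]
    (x y : X) (hxy : ‖x + y‖ = ‖x - y‖) (α : ℝ) :
    (1 ≤ |α| → ‖x + y‖ ≤ ‖x + α • y‖ ∧ ‖x + α • y‖ ≤ |α| * ‖x + y‖) ∧
    (|α| ≤ 1 → |α| * ‖x + y‖ ≤ ‖x + α • y‖ ∧ ‖x + α • y‖ ≤ ‖x + y‖) :=
  ⟨fun hα ↦ ⟨norm_add_le_norm_add_smul_of_one_le_abs hxy hα,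
      norm_add_smul_le_abs_mul_of_one_le_abs hxy hα⟩,
    fun hα ↦ ⟨abs_mul_le_norm_add_smul_of_abs_le_one hxy hα,
      norm_add_smul_le_of_abs_le_one hxy hα⟩⟩
end
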